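/- arXiv:2204.02595 — 3 statements merged into one kernel-verified Lean document; each statement's English description precedes it below -/
import Mathlib

section
/- For every real number λ, every integer n ≥ 0 and every nonnegative integer m, one has (m)_{n,λ} = Σ_{l=0}^{n} S_{2,λ}(n,l) (m)_l, where (m)_l = m(m−1)⋯(m−l+1) is the ordinary falling factorial. (This is equation (23), obtained in the paper by applying the normal ordering of (a†a)_{n,λ} to the number state |m⟩.) -/
open Finset

/-- Generalized falling factorial `(x)_{n,λ} = x(x-λ)⋯(x-(n-1)λ)`. -/
noncomputable def dfall (lam x : ℝ) (n : ℕ) : ℝ := ∏ i ∈ Finset.range n, (x - i * lam)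

/-- Ordinary falling factorial `(x)_n = x(x-1)⋯(x-n+1)`. -/
noncomputable def ffall (x : ℝ) (n : ℕ) : ℝ := ∏ i ∈ Finset.range n, (x - i)

/-- Degenerate Stirling numbers of the second kind, defined by the recurrence
`S_{2,λ}(0,0)=1`, `S_{2,λ}(n,k)=0` for `k>n` (and `k<0`), and
`S_{2,λ}(n+1,k) = S_{2,λ}(n,k-1) + (k-nλ) S_{2,λ}(n,k)`. -/
noncomputable def dStir (lam : ℝ) : ℕ → ℕ → ℝ
  | 0, 0 => 1
  | 0, _ + 1 => 0
  | n + 1, 0 => ((0 : ℝ) - n * lam) * dStir lam n 0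
  | n + 1, k + 1 => dStir lam n k + (((k : ℝ) + 1) - n * lam) * dStir lam n (k + 1)

/-- Degenerate Bell polynomials `φ_{n,λ}(x) = Σ_{k=0}^n S_{2,λ}(n,k) x^k`. -/
noncomputable def dBell (lam x : ℝ) (n : ℕ) : ℝ :=
  ∑ k ∈ Finset.range (n + 1), dStir lam n k * x ^ k
lemma dStir_eq_zero (lam : ℝ) : ∀ n k : ℕ, n < k → dStir lam n k = 0 := by
  intro n
  induction n with
  | zero => intro k hk; match k, hk with | k + 1, _ => rfl
  | succ n ih =>
    intro k hk
    match k, hk with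
    | k + 1, hk =>
      show dStir lam n k + (((k : ℝ) + 1) - n * lam) * dStir lam n (k + 1) = 0
      rw [ih k (by omega), ih (k + 1) (by omega)]; ring

/-- For every real `λ`, every `n ≥ 0` and every nonnegative integer `m`,
`(m)_{n,λ} = Σ_{l=0}^{n} S_{2,λ}(n,l) (m)_l`. -/
theorem dfall_nat_eq_sum_dStir_ffall (lam : ℝ) (n : ℕ) (m : ℕ) :
    dfall lam (m : ℝ) n = ∑ l ∈ Finset.range (n + 1), dStir lam n l * ffall (m : ℝ) l := by
  induction n with
  | zero => simp [dfall, ffall, dStir]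
  | succ n ih =>
    have hzero : dStir lam n (n + 1) = 0 := dStir_eq_zero lam n (n + 1) (by omega)
    have hsucc : ∀ k : ℕ, ffall (m : ℝ) (k + 1) = ffall (m : ℝ) k * ((m : ℝ) - k) := by
      intro k; simp [ffall, Finset.prod_range_succ]
    calc dfall lam (m : ℝ) (n + 1)
        = dfall lam (m : ℝ) n * ((m : ℝ) - n * lam) := by
          simp [dfall, Finset.prod_range_succ]
      _ = ∑ k ∈ Finset.range (n + 1),
            dStir lam n k * (ffall (m : ℝ) (k + 1) + ((k : ℝ) - n * lam) * ffall (m : ℝ) k) := by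
          rw [ih, Finset.sum_mul]
          refine Finset.sum_congr rfl fun k _ => ?_
          rw [hsucc k]; ring
      _ = ∑ l ∈ Finset.range (n + 2), dStir lam (n + 1) l * ffall (m : ℝ) l := by
          rw [Finset.sum_range_succ' (fun l => dStir lam (n + 1) l * ffall (m : ℝ) l) (n + 1)]
          simp only [mul_add, Finset.sum_add_distrib]
          have h1 : ∀ k ∈ Finset.range (n + 1),
              dStir lam (n + 1) (k + 1) * ffall (m : ℝ) (k + 1)
              = dStir lam n k * ffall (m : ℝ) (k + 1)
                + dStir lam n (k + 1) * (((k : ℝ) + 1 - n * lam) * ffall (m : ℝ) (k + 1)) := by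
            intro k _
            show (dStir lam n k + (((k : ℝ) + 1) - n * lam) * dStir lam n (k + 1)) * _ = _
            ring
          rw [Finset.sum_congr rfl h1, Finset.sum_add_distrib]
          have h2 : ∑ k ∈ Finset.range (n + 1),
              dStir lam n (k + 1) * (((k : ℝ) + 1 - n * lam) * ffall (m : ℝ) (k + 1))
              + dStir lam (n + 1) 0 * ffall (m : ℝ) 0
              = ∑ k ∈ Finset.range (n + 1),
                  dStir lam n k * (((k : ℝ) - n * lam) * ffall (m : ℝ) k) := by
            rw [show dStir lam (n + 1) 0 = ((0 : ℝ) - n * lam) * dStir lam n 0 from rfl]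
            rw [Finset.sum_range_succ, hzero]
            conv_rhs => rw [Finset.sum_range_succ' _ n]
            rw [show (∑ k ∈ Finset.range n,
                  dStir lam n (k + 1) * (((k : ℝ) + 1 - n * lam) * ffall (m : ℝ) (k + 1)))
                = ∑ k ∈ Finset.range n,
                  dStir lam n (k + 1) * (((k + 1 : ℕ) - (n : ℝ) * lam) * ffall (m : ℝ) (k + 1))
              from Finset.sum_congr rfl fun k _ => by push_cast; ring]
            rw [show ffall (m : ℝ) 0 = 1 from rfl]
            push_cast
            ring
          rw [add_assoc, h2, ← Finset.sum_add_distrib]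
end

section
/- For every real number λ, every integer k ≥ 0 and every real number x ≥ 0, the series Σ_{n=0}^{∞} (n)_{k,λ} x^n/n! converges and the degenerate Bell polynomial satisfies the Dobinski-like formula φ_{k,λ}(x) = e^{−x} Σ_{n=0}^{∞} (n)_{k,λ} x^n/n!. (This is the first equality of (36), obtained in the paper by evaluating ⟨z|(a†a)_{k,λ}|z⟩ in two ways with x = |z|².) -/
open Finset

lemma dfall_eq_sum (lam : ℝ) (k : ℕ) (y : ℝ) :
    dfall lam y k = ∑ j ∈ Finset.range (k + 1), dStir lam k j * ffall y j := by
  induction k with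
  | zero => simp [dfall, ffall, dStir]
  | succ k ih =>
    have hstep : dfall lam y (k + 1) = dfall lam y k * (y - k * lam) := by
      simp [dfall, Finset.prod_range_succ]
    rw [hstep, ih, Finset.sum_mul]
    rw [Finset.sum_range_succ' (fun j => dStir lam (k+1) j * ffall y j) (k+1)]
    have hterm : ∀ j ∈ Finset.range (k + 1),
        dStir lam k j * ffall y j * (y - k * lam)
          = dStir lam k j * ffall y (j+1) + ((j : ℝ) - k * lam) * dStir lam k j * ffall y j := by
      intro j _
      have : ffall y (j + 1) = ffall y j * (y - j) := by
        simp [ffall, Finset.prod_range_succ]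
      rw [this]; ring
    rw [Finset.sum_congr rfl hterm, Finset.sum_add_distrib]
    have h2 : ∑ j ∈ Finset.range (k + 1), ((j : ℝ) - k * lam) * dStir lam k j * ffall y j
        = (∑ j ∈ Finset.range (k + 1),
            (((j : ℝ) + 1) - k * lam) * dStir lam k (j+1) * ffall y (j+1))
          + ((0 : ℝ) - k * lam) * dStir lam k 0 * ffall y 0 := by
      rw [Finset.sum_range_succ' (fun j => ((j : ℝ) - k * lam) * dStir lam k j * ffall y j) k]
      rw [Finset.sum_range_succ
        (fun j => (((j : ℝ) + 1) - k * lam) * dStir lam k (j+1) * ffall y (j+1)) k]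
      rw [dStir_eq_zero lam k (k+1) (by omega)]
      push_cast; ring
    rw [h2]
    have h3 : ∀ j ∈ Finset.range (k + 1),
        dStir lam (k+1) (j+1) * ffall y (j+1)
          = dStir lam k j * ffall y (j+1)
            + (((j : ℝ) + 1) - k * lam) * dStir lam k (j+1) * ffall y (j+1) := by
      intro j _
      show (dStir lam k j + (((j : ℝ) + 1) - k * lam) * dStir lam k (j + 1)) * ffall y (j+1) = _
      ring
    rw [Finset.sum_congr rfl h3, Finset.sum_add_distrib]
    have h0 : dStir lam (k+1) 0 * ffall y 0 = ((0:ℝ) - k * lam) * dStir lam k 0 * ffall y 0 := by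
      show ((0 : ℝ) - k * lam) * dStir lam k 0 * ffall y 0 = _; ring
    rw [h0]; ring

lemma ffall_fact : ∀ (j m : ℕ),
    ffall ((m + j : ℕ) : ℝ) j * (m.factorial : ℝ) = ((m + j).factorial : ℝ) := by
  intro j
  induction j with
  | zero => simp [ffall]
  | succ j ih =>
    intro m
    have h1 : ffall ((m + (j+1) : ℕ) : ℝ) (j+1)
        = ffall ((m + (j+1) : ℕ) : ℝ) j * (((m + (j+1) : ℕ) : ℝ) - j) := by
      simp [ffall, Finset.prod_range_succ]
    have h2 : ((m + (j+1) : ℕ) : ℝ) = (((m+1) + j : ℕ) : ℝ) := by push_cast; ring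
    rw [h1, h2]
    have := ih (m + 1)
    have hfac : ((m+1).factorial : ℝ) = (m+1) * m.factorial := by
      push_cast [Nat.factorial_succ]; ring
    have hgoal : ((m + 1) + j).factorial = (m + (j+1)).factorial := by ring_nf
    rw [show (((m+1)+j : ℕ):ℝ) - (j:ℝ) = ((m:ℝ)+1) by push_cast; ring]
    calc ffall (((m+1) + j : ℕ) : ℝ) j * ((m:ℝ)+1) * (m.factorial : ℝ)
        = ffall (((m+1) + j : ℕ) : ℝ) j * ((m+1).factorial : ℝ) := by rw [hfac]; ring
      _ = (((m+1) + j).factorial : ℝ) := ih (m+1)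
      _ = ((m + (j+1)).factorial : ℝ) := by rw [hgoal]

lemma ffall_zero_of_lt {n j : ℕ} (h : n < j) : ffall (n : ℝ) j = 0 := by
  apply Finset.prod_eq_zero (Finset.mem_range.mpr h)
  simp

lemma ffall_series (x : ℝ) (j : ℕ) :
    Summable (fun n : ℕ => ffall (n : ℝ) j * x ^ n / n.factorial)
      ∧ ∑' n : ℕ, ffall (n : ℝ) j * x ^ n / n.factorial = x ^ j * Real.exp x := by
  set f : ℕ → ℝ := fun n => ffall (n : ℝ) j * x ^ n / n.factorial with hf
  have hshift : ∀ m : ℕ, f (m + j) = x ^ j * (x ^ m / m.factorial) := by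
    intro m
    have hff := ffall_fact j m
    have hm : (m.factorial : ℝ) ≠ 0 := Nat.cast_ne_zero.mpr m.factorial_ne_zero
    have hmj : (((m+j).factorial : ℕ) : ℝ) ≠ 0 := Nat.cast_ne_zero.mpr (m+j).factorial_ne_zero
    simp only [hf]
    rw [pow_add]
    field_simp
    push_cast at hff ⊢
    linear_combination (x ^ m * x ^ j) * hff
  have hsum2 : Summable (fun m : ℕ => f (m + j)) := by
    simp only [hshift]
    exact (Real.summable_pow_div_factorial x).mul_left _
  have hsum : Summable f := (summable_nat_add_iff j).mp hsum2
  refine ⟨hsum, ?_⟩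
  have hexp : Real.exp x = ∑' n : ℕ, x ^ n / n.factorial := by
    rw [Real.exp_eq_exp_ℝ, NormedSpace.exp_eq_tsum_div]
  have := Summable.sum_add_tsum_nat_add j hsum
  have hzero : ∑ i ∈ Finset.range j, f i = 0 := by
    apply Finset.sum_eq_zero
    intro i hi
    simp only [hf]
    rw [ffall_zero_of_lt (Finset.mem_range.mp hi)]
    ring
  rw [← this, hzero, zero_add]
  calc ∑' m : ℕ, f (m + j) = ∑' m : ℕ, x ^ j * (x ^ m / m.factorial) := by
        exact tsum_congr hshift
    _ = x ^ j * ∑' m : ℕ, x ^ m / m.factorial := tsum_mul_left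
    _ = x ^ j * Real.exp x := by rw [hexp]

/-- for `λ ∈ ℝ`, `k ≥ 0` and real `x ≥ 0`, the series
`Σ_{n=0}^{∞} (n)_{k,λ} x^n/n!` converges, and the Dobinski-like formula
`φ_{k,λ}(x) = e^{−x} Σ_{n=0}^{∞} (n)_{k,λ} x^n/n!` holds. -/
theorem dBell_dobinski (lam : ℝ) (k : ℕ) (x : ℝ) (hx : 0 ≤ x) :
    Summable (fun n : ℕ => dfall lam (n : ℝ) k * x ^ n / n.factorial)
      ∧ dBell lam x k
          = Real.exp (-x) * ∑' n : ℕ, dfall lam (n : ℝ) k * x ^ n / n.factorial := by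
  have key : (fun n : ℕ => dfall lam (n : ℝ) k * x ^ n / n.factorial)
      = fun n : ℕ => ∑ j ∈ Finset.range (k + 1),
          dStir lam k j * (ffall (n : ℝ) j * x ^ n / n.factorial) := by
    funext n
    rw [dfall_eq_sum lam k (n : ℝ), Finset.sum_mul, Finset.sum_div]
    apply Finset.sum_congr rfl
    intro j _; ring
  have hsummands : ∀ j ∈ Finset.range (k + 1),
      Summable (fun n : ℕ => dStir lam k j * (ffall (n : ℝ) j * x ^ n / n.factorial)) :=
    fun j _ => ((ffall_series x j).1).mul_left _
  have hsum : Summable (fun n : ℕ => dfall lam (n : ℝ) k * x ^ n / n.factorial) := by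
    rw [key]; exact summable_sum hsummands
  refine ⟨hsum, ?_⟩
  have htsum : ∑' n : ℕ, dfall lam (n : ℝ) k * x ^ n / n.factorial
      = Real.exp x * dBell lam x k := by
    rw [key, Summable.tsum_finsetSum hsummands]
    have : ∀ j ∈ Finset.range (k + 1),
        ∑' n : ℕ, dStir lam k j * (ffall (n : ℝ) j * x ^ n / n.factorial)
          = dStir lam k j * (x ^ j * Real.exp x) := by
      intro j _
      rw [tsum_mul_left, (ffall_series x j).2]
    rw [Finset.sum_congr rfl this, dBell, Finset.mul_sum]
    apply Finset.sum_congr rfl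
    intro j _; ring
  rw [htsum, ← mul_assoc, ← Real.exp_add]
  simp
end

section
/- For every real number λ, every integer k ≥ 1 and every real number x ≥ 0, one has φ_{k,λ}(x) = e^{−x} Σ_{n=1}^{∞} (x^n/(n−1)!) (n−λ)_{k−1,λ}, where the series on the right converges. (This is the second equality of (36).) -/
open Finset

/-!
Expanding the degenerate falling factorial in ordinary ones, `(x)_{k,λ} = Σ_j S_{2,λ}(k,j) (x)_j`
(this is what the recurrence for `S_{2,λ}` encodes), and using `Σ_n (n)_j xⁿ/n! = x^j eˣ`, one gets
the degenerate Dobinski formula `Σ_n (n)_{k,λ} xⁿ/n! = eˣ φ_{k,λ}(x)`. Since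
`(n)_{k,λ} = n (n-λ)_{k-1,λ}`, the term `n = 0` vanishes and the rest is the stated series.
-/

open Nat

lemma dStir_eq_zero_of_lt (lam : ℝ) {n j : ℕ} (h : n < j) : dStir lam n j = 0 := by
  induction n generalizing j with
  | zero => obtain ⟨j, rfl⟩ := Nat.exists_eq_add_of_lt h; rfl
  | succ n ih =>
    obtain ⟨j, rfl⟩ := Nat.exists_eq_add_of_lt (Nat.zero_lt_of_lt h)
    simp only [zero_add] at h ⊢
    rw [dStir, ih (by omega), ih (by omega)]
    ring

lemma sum_dStir_succ_mul (lam : ℝ) (k : ℕ) (f : ℕ → ℝ) :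
    ∑ j ∈ range (k + 2), dStir lam (k + 1) j * f j
      = ∑ j ∈ range (k + 1), dStir lam k j * (f (j + 1) + (j - k * lam) * f j) := by
  have hlow : ∑ j ∈ range (k + 1), dStir lam k j * ((j - k * lam) * f j)
      = ∑ j ∈ range (k + 1), ((j + 1 : ℝ) - k * lam) * dStir lam k (j + 1) * f (j + 1)
        + (0 - k * lam) * dStir lam k 0 * f 0 := by
    rw [sum_range_succ', sum_range_succ _ k, dStir_eq_zero_of_lt lam (Nat.lt_succ_self k),
      mul_zero, zero_mul, add_zero]
    push_cast
    exact congrArg₂ (· + ·) (sum_congr rfl fun _ _ => by ring) (by ring)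
  simp only [mul_add, sum_add_distrib, hlow]
  rw [sum_range_succ']
  simp only [dStir, add_mul, sum_add_distrib]
  ring

lemma dfall_eq_sum_dStir_mul_ffall (lam x : ℝ) (k : ℕ) :
    dfall lam x k = ∑ j ∈ range (k + 1), dStir lam k j * ffall x j := by
  induction k with
  | zero => simp [dfall, dStir, ffall]
  | succ k ih =>
    rw [sum_dStir_succ_mul, dfall, prod_range_succ, ← dfall, ih, sum_mul]
    refine sum_congr rfl fun j _ => ?_
    simp only [ffall, prod_range_succ]
    ring

lemma ffall_eq_eval_descPochhammer (x : ℝ) (j : ℕ) :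
    ffall x j = (descPochhammer ℝ j).eval x := by
  induction j with
  | zero => simp [ffall]
  | succ j ih => rw [descPochhammer_succ_eval, ← ih, ffall, prod_range_succ, ← ffall]

lemma ffall_natCast (n j : ℕ) : ffall n j = n.descFactorial j := by
  rw [ffall_eq_eval_descPochhammer, descPochhammer_eval_eq_descFactorial]

lemma hasSum_ffall_mul_pow_div_factorial (x : ℝ) (j : ℕ) :
    HasSum (fun n : ℕ => ffall n j * (x ^ n / n !)) (x ^ j * Real.exp x) := by
  have hlow : ∑ n ∈ range j, ffall n j * (x ^ n / n !) = 0 :=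
    sum_eq_zero fun n hn => by
      rw [ffall_natCast, descFactorial_eq_zero_iff_lt.mpr (mem_range.mp hn)]; simp
  have hshift (m : ℕ) : ffall ↑(m + j) j * (x ^ (m + j) / (m + j)!) = x ^ j * (x ^ m / m !) := by
    have h := factorial_mul_descFactorial (Nat.le_add_left j m)
    rw [Nat.add_sub_cancel] at h
    rw [ffall_natCast, ← h, pow_add]
    push_cast
    field_simp
  rw [← hasSum_nat_add_iff' j, hlow, sub_zero]
  simp only [hshift]
  rw [Real.exp_eq_exp_ℝ]
  exact (NormedSpace.expSeries_div_hasSum_exp x).mul_left _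

lemma hasSum_pow_div_factorial_mul_dfall (lam x : ℝ) (k : ℕ) :
    HasSum (fun n : ℕ => x ^ n / n ! * dfall lam n k) (Real.exp x * dBell lam x k) := by
  have hterm (n : ℕ) : x ^ n / n ! * dfall lam n k
      = ∑ j ∈ range (k + 1), dStir lam k j * (ffall n j * (x ^ n / n !)) := by
    rw [dfall_eq_sum_dStir_mul_ffall, mul_sum]
    exact sum_congr rfl fun _ _ => by ring
  have hvalue : Real.exp x * dBell lam x k
      = ∑ j ∈ range (k + 1), dStir lam k j * (x ^ j * Real.exp x) := by
    rw [dBell, mul_sum]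
    exact sum_congr rfl fun _ _ => by ring
  simp only [hterm, hvalue]
  exact hasSum_sum fun j _ => (hasSum_ffall_mul_pow_div_factorial x j).mul_left _

lemma dfall_succ_eq_mul (lam y : ℝ) (m : ℕ) : dfall lam y (m + 1) = y * dfall lam (y - lam) m := by
  simp only [dfall, prod_range_succ']
  rw [mul_comm]
  congr 1
  · simp
  · exact prod_congr rfl fun i _ => by push_cast; ring

theorem dBell_dobinski'_general (lam : ℝ) (k : ℕ) (hk : 1 ≤ k) (x : ℝ) :
    Summable (fun n : ℕ => x ^ (n + 1) / n.factorial * dfall lam ((n : ℝ) + 1 - lam) (k - 1))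
      ∧ dBell lam x k
          = Real.exp (-x)
              * ∑' n : ℕ, x ^ (n + 1) / n.factorial * dfall lam ((n : ℝ) + 1 - lam) (k - 1) := by
  obtain ⟨m, rfl⟩ := Nat.exists_eq_add_of_le' hk
  rw [Nat.add_sub_cancel]
  have hshift (n : ℕ) : x ^ (n + 1) / (n + 1)! * dfall lam ↑(n + 1) (m + 1)
      = x ^ (n + 1) / n ! * dfall lam ((n : ℝ) + 1 - lam) m := by
    rw [dfall_succ_eq_mul, factorial_succ]
    push_cast
    field_simp
  have hsum := hasSum_pow_div_factorial_mul_dfall lam x (m + 1)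
  rw [← hasSum_nat_add_iff' 1] at hsum
  have hzero : dfall lam 0 (m + 1) = 0 := by rw [dfall_succ_eq_mul, zero_mul]
  simp only [hshift, range_one, sum_singleton, Nat.cast_zero, hzero, mul_zero, sub_zero] at hsum
  refine ⟨hsum.summable, ?_⟩
  rw [hsum.tsum_eq, ← mul_assoc, ← Real.exp_add, neg_add_cancel, Real.exp_zero, one_mul]

/-- for `λ ∈ ℝ`, `k ≥ 1` and real `x ≥ 0`, the series
`Σ_{n=1}^{∞} (x^n/(n−1)!) (n−λ)_{k−1,λ}` converges (here re-indexed by `n ↦ n+1` so as to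
run over all of `ℕ`), and `φ_{k,λ}(x) = e^{−x} Σ_{n=1}^{∞} (x^n/(n−1)!) (n−λ)_{k−1,λ}`. -/
theorem dBell_dobinski' (lam : ℝ) (k : ℕ) (hk : 1 ≤ k) (x : ℝ) (hx : 0 ≤ x) :
    Summable (fun n : ℕ => x ^ (n + 1) / n.factorial * dfall lam ((n : ℝ) + 1 - lam) (k - 1))
      ∧ dBell lam x k
          = Real.exp (-x)
              * ∑' n : ℕ, x ^ (n + 1) / n.factorial * dfall lam ((n : ℝ) + 1 - lam) (k - 1) :=
  dBell_dobinski'_general lam k hk x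
end
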